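/- arXiv:1902.09206 — 7 statements merged into one kernel-verified Lean document; each statement's English description precedes it below -/
import Mathlib

section
/- For τ>0 and σ>1, there exists a constant C>0 such that M_{p+q}^{τ,σ} ≤ C^{p^σ + q^σ} · M_p^{τ2^{σ-1},σ} · M_q^{τ2^{σ-1},σ} for all p, q ∈ ℕ. -/
/-!
Write `M_n^{t,σ} = exp (t n^σ log n)` and `K = τ 2^(σ-1)`. By convexity of `x ↦ x^σ`,
`τ (p+q)^σ ≤ K (p^σ + q^σ)`, so it suffices to bound `p^σ log (p+q)` by `p^σ log p + p^σ + q^σ`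
(and symmetrically in `q`). This follows from `log (p+q) - log p ≤ q/p` and
`p^(σ-1) q ≤ max (p^σ) (q^σ)`. Hence `C = exp (2K)` works.
-/

open Real

/-- The sequence `M_p^{τ,σ} = p^{τ p^σ}`, with `M_0 = 1`. -/
noncomputable def Mseq (τ σ : ℝ) (p : ℕ) : ℝ := (p : ℝ) ^ (τ * (p : ℝ) ^ σ)

theorem Real.rpow_add_le_mul_rpow_add_rpow {a b σ : ℝ} (ha : 0 ≤ a) (hb : 0 ≤ b) (hσ : 1 ≤ σ) :
    (a + b) ^ σ ≤ 2 ^ (σ - 1) * (a ^ σ + b ^ σ) := by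
  lift a to NNReal using ha
  lift b to NNReal using hb
  exact_mod_cast NNReal.rpow_add_le_mul_rpow_add_rpow a b hσ

theorem Real.rpow_sub_one_mul_le_rpow_add_rpow {a b σ : ℝ} (ha : 0 ≤ a) (hb : 0 ≤ b)
    (hσ : 1 ≤ σ) : a ^ (σ - 1) * b ≤ a ^ σ + b ^ σ := by
  have hσ' : 0 ≤ σ - 1 := by linarith
  rcases le_total b a with hba | hab
  · calc a ^ (σ - 1) * b ≤ a ^ (σ - 1) * a := by gcongr
      _ = a ^ σ := by rw [← rpow_add_one' ha (by linarith), sub_add_cancel]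
      _ ≤ a ^ σ + b ^ σ := le_add_of_nonneg_right (rpow_nonneg hb σ)
  · calc a ^ (σ - 1) * b ≤ b ^ (σ - 1) * b := by gcongr
      _ = b ^ σ := by rw [← rpow_add_one' hb (by linarith), sub_add_cancel]
      _ ≤ a ^ σ + b ^ σ := le_add_of_nonneg_left (rpow_nonneg ha σ)

theorem Real.log_add_le_log_add_div {a b : ℝ} (ha : 0 < a) (hb : 0 ≤ b) :
    log (a + b) ≤ log a + b / a := by
  have h := log_le_sub_one_of_pos (x := (a + b) / a) (by positivity)
  rw [log_div (by positivity) ha.ne'] at h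
  have : (a + b) / a - 1 = b / a := by field_simp; ring
  linarith

theorem Real.rpow_mul_log_add_le {a b σ : ℝ} (ha : 0 ≤ a) (hb : 0 ≤ b) (hσ : 1 ≤ σ) :
    a ^ σ * log (a + b) ≤ a ^ σ * log a + (a ^ σ + b ^ σ) := by
  rcases ha.eq_or_lt with rfl | ha
  · simp [zero_rpow (by linarith : σ ≠ 0), rpow_nonneg hb σ]
  calc a ^ σ * log (a + b) ≤ a ^ σ * (log a + b / a) := by
        gcongr; exact log_add_le_log_add_div ha hb
    _ = a ^ σ * log a + a ^ (σ - 1) * b := by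
        rw [rpow_sub_one ha.ne']; field_simp
    _ ≤ a ^ σ * log a + (a ^ σ + b ^ σ) := by
        gcongr; exact rpow_sub_one_mul_le_rpow_add_rpow ha.le hb hσ

theorem Mseq_eq_exp {σ : ℝ} (hσ : σ ≠ 0) (τ : ℝ) (n : ℕ) :
    Mseq τ σ n = exp (τ * (n : ℝ) ^ σ * log n) := by
  rcases n.eq_zero_or_pos with rfl | hn
  · simp [Mseq, zero_rpow hσ]
  · rw [Mseq, rpow_def_of_pos (by positivity)]
    ring_nf

theorem natCast_add_rpow_mul_log_le {σ : ℝ} (hσ : 1 ≤ σ) (p q : ℕ) :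
    ((p + q : ℕ) : ℝ) ^ σ * log (p + q : ℕ) ≤
      2 ^ (σ - 1) * ((p : ℝ) ^ σ * log p + (q : ℝ) ^ σ * log q +
        2 * ((p : ℝ) ^ σ + (q : ℝ) ^ σ)) := by
  have hp : (0 : ℝ) ≤ p := p.cast_nonneg
  have hq : (0 : ℝ) ≤ q := q.cast_nonneg
  have hlog := log_natCast_nonneg (p + q)
  push_cast at hlog ⊢
  have hconv := rpow_add_le_mul_rpow_add_rpow hp hq hσ
  have hP := rpow_mul_log_add_le hp hq hσ
  have hQ := rpow_mul_log_add_le hq hp hσ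
  rw [add_comm (q : ℝ)] at hQ
  calc ((p : ℝ) + q) ^ σ * log (p + q)
      ≤ 2 ^ (σ - 1) * ((p : ℝ) ^ σ + (q : ℝ) ^ σ) * log (p + q) := by gcongr
    _ ≤ _ := by rw [mul_assoc]; gcongr; linarith

theorem stmt1 (τ σ : ℝ) (hτ : 0 < τ) (hσ : 1 < σ) :
    ∃ C > (0 : ℝ), ∀ p q : ℕ,
      Mseq τ σ (p + q) ≤
        C ^ ((p : ℝ) ^ σ + (q : ℝ) ^ σ) *
          Mseq (τ * 2 ^ (σ - 1)) σ p * Mseq (τ * 2 ^ (σ - 1)) σ q := by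
  refine ⟨exp (2 * (τ * 2 ^ (σ - 1))), exp_pos _, fun p q => ?_⟩
  have hσ0 : σ ≠ 0 := by linarith
  rw [Mseq_eq_exp hσ0, Mseq_eq_exp hσ0, Mseq_eq_exp hσ0, ← exp_mul, ← exp_add, ← exp_add]
  gcongr
  have key := mul_le_mul_of_nonneg_left (natCast_add_rpow_mul_log_le hσ.le p q) hτ.le
  linarith
end

section
/- For τ>0 and σ>1, the quotients satisfy M_{p-1}^{τ,σ}/M_p^{τ,σ} ≤ 1/(2p)^{τ(p-1)^{σ-1}} for all p ≥ 1, and consequently the series ∑_{p=1}^∞ M_{p-1}^{τ,σ}/M_p^{τ,σ} converges. -/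
open Real Filter Asymptotics

lemma two_mul_pow_le (n : ℕ) (hn : 1 ≤ n) : 2 * (n:ℝ)^n ≤ ((n:ℝ)+1)^n := by
  have hn0 : (0:ℝ) < n := by exact_mod_cast hn
  have hB : 1 + (n:ℝ) * (1/n) ≤ (1 + 1/(n:ℝ))^n :=
    one_add_mul_le_pow (le_trans (by norm_num) (one_div_nonneg.mpr hn0.le)) n
  have h2 : (2:ℝ) ≤ (1 + 1/(n:ℝ))^n := by
    have hne : (n:ℝ) ≠ 0 := ne_of_gt hn0
    have : 1 + (n:ℝ) * (1/n) = 2 := by field_simp; norm_num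
    linarith
  calc 2 * (n:ℝ)^n ≤ (1 + 1/(n:ℝ))^n * (n:ℝ)^n :=
        mul_le_mul_of_nonneg_right h2 (by positivity)
    _ = ((1 + 1/(n:ℝ)) * n)^n := (mul_pow _ _ _).symm
    _ = ((n:ℝ)+1)^n := by
        congr 1
        field_simp

lemma key_ineq (τ σ : ℝ) (hτ : 0 < τ) (hσ : 1 < σ) (p : ℕ) (hp : 1 ≤ p) :
    Mseq τ σ (p - 1) / Mseq τ σ p ≤
      1 / (2 * (p : ℝ)) ^ (τ * ((p : ℝ) - 1) ^ (σ - 1)) := by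
  rcases eq_or_lt_of_le hp with h1 | h2
  · subst h1
    norm_num [Mseq, Real.zero_rpow (show σ ≠ 0 by linarith),
      Real.zero_rpow (show σ - 1 ≠ 0 by intro h; linarith)]
  · -- p ≥ 2
    set P := (p:ℝ) with hPdef
    have hP2 : (2:ℝ) ≤ P := by
      rw [hPdef]
      exact_mod_cast (show (2:ℕ) ≤ p from h2)
    have hq : ((p-1:ℕ):ℝ) = P - 1 := by
      push_cast [Nat.cast_sub hp]
      ring
    set q := P - 1 with hqdef
    have hq1 : 1 ≤ q := by simp only [hqdef]; linarith
    have hq0 : 0 < q := by linarith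
    set e := τ * q ^ (σ-1) with hedef
    have he0 : 0 ≤ e := by
      have := Real.rpow_nonneg hq0.le (σ-1)
      positivity
    have hexp : τ * q ^ σ = q * e := by
      have hσq : q ^ σ = q ^ (σ-1) * q := by
        nth_rewrite 1 [show σ = (σ-1) + 1 by ring]
        rw [Real.rpow_add_one (ne_of_gt hq0)]
      rw [hσq, hedef]; ring
    have hnum : Mseq τ σ (p-1) = (q ^ q) ^ e := by
      rw [Mseq, hq, hexp, Real.rpow_mul hq0.le]
    have hP1 : (1:ℝ) ≤ P := by linarith
    have hden : P ^ (P * e) ≤ Mseq τ σ p := by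
      rw [Mseq]
      apply Real.rpow_le_rpow_of_exponent_le hP1
      have h1 : q ^ (σ-1) ≤ P ^ (σ-1) :=
        Real.rpow_le_rpow hq0.le (by simp only [hqdef]; linarith) (by linarith)
      have h2' : P ^ σ = P ^ (σ-1) * P := by
        nth_rewrite 1 [show σ = (σ-1) + 1 by ring]
        rw [Real.rpow_add_one (by positivity : P ≠ 0)]
      rw [h2', hedef]
      have hmul := mul_le_mul_of_nonneg_left h1 (show (0:ℝ) ≤ τ * P by positivity)
      nlinarith [hmul]
    have hden' : (P ^ P) ^ e ≤ Mseq τ σ p := by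
      rwa [← Real.rpow_mul (by linarith : (0:ℝ) ≤ P)]
    have hPPpos : (0:ℝ) < (P ^ P) ^ e :=
      Real.rpow_pos_of_pos (Real.rpow_pos_of_pos (by linarith) _) _
    have hratio : Mseq τ σ (p-1) / Mseq τ σ p ≤ (q ^ q) ^ e / (P ^ P) ^ e := by
      rw [hnum]
      exact div_le_div_of_nonneg_left (Real.rpow_nonneg (Real.rpow_nonneg hq0.le _) _)
        hPPpos hden'
    -- convert rpow-powers to nat powers
    have hqq : q ^ q = q ^ (p-1 : ℕ) := by
      rw [← hq, Real.rpow_natCast]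
    have hPP : P ^ P = P ^ (p : ℕ) := by
      rw [hPdef, Real.rpow_natCast]
    have hbase : q ^ (p-1:ℕ) / P ^ (p:ℕ) ≤ 1 / (2 * P) := by
      rw [div_le_div_iff₀ (by positivity) (by positivity)]
      have hl := two_mul_pow_le (p-1) (by omega)
      rw [hq] at hl
      have hq1P : (P - 1) + 1 = P := by ring
      rw [hq1P] at hl
      have hpp : P ^ (p:ℕ) = P ^ (p-1:ℕ) * P := by
        rw [← pow_succ]
        congr 1
        omega
      rw [hpp]
      have hqn : (0:ℝ) ≤ q ^ (p-1:ℕ) := pow_nonneg hq0.le _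
      nlinarith [hl, hP2, hqn]
    have hfinal : (q ^ q) ^ e / (P ^ P) ^ e ≤ 1 / (2 * P) ^ e := by
      rw [← Real.div_rpow (Real.rpow_nonneg hq0.le _) (Real.rpow_nonneg (by linarith) _)]
      rw [show (1:ℝ) / (2*P) ^ e = ((1:ℝ)/(2*P)) ^ e by
        rw [Real.div_rpow (by norm_num) (by positivity), Real.one_rpow]]
      apply Real.rpow_le_rpow (by positivity) _ he0
      rw [hqq, hPP]
      exact hbase
    exact le_trans hratio hfinal

theorem stmt3 (τ σ : ℝ) (hτ : 0 < τ) (hσ : 1 < σ) :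
    (∀ p : ℕ, 1 ≤ p →
        Mseq τ σ (p - 1) / Mseq τ σ p ≤
          1 / (2 * (p : ℝ)) ^ (τ * ((p : ℝ) - 1) ^ (σ - 1))) ∧
      Summable (fun p : ℕ => Mseq τ σ p / Mseq τ σ (p + 1)) := by
  refine ⟨fun p hp => key_ineq τ σ hτ hσ p hp, ?_⟩
  have hnonneg : ∀ p : ℕ, 0 ≤ Mseq τ σ p / Mseq τ σ (p+1) := fun p =>
    div_nonneg (Real.rpow_nonneg (Nat.cast_nonneg _) _)
      (Real.rpow_nonneg (Nat.cast_nonneg _) _)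
  have htend : Tendsto (fun p : ℕ => τ * (p:ℝ) ^ (σ-1)) atTop atTop := by
    apply Tendsto.const_mul_atTop hτ
    exact (tendsto_rpow_atTop (by linarith)).comp tendsto_natCast_atTop_atTop
  have hsum2 : Summable (fun p : ℕ => 1 / (p:ℝ)^(2:ℕ)) :=
    Real.summable_one_div_nat_pow.mpr (by norm_num)
  apply summable_of_isBigO_nat hsum2
  apply IsBigO.of_bound 1
  filter_upwards [htend.eventually_ge_atTop 2, eventually_ge_atTop 1] with p hE hp1
  have hkey := key_ineq τ σ hτ hσ (p+1) (by omega)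
  have hsimp : ((p+1:ℕ) - 1 : ℕ) = p := by omega
  rw [hsimp] at hkey
  have hcast : ((p+1:ℕ):ℝ) - 1 = (p:ℝ) := by push_cast; ring
  rw [hcast] at hkey
  set E := τ * (p:ℝ)^(σ-1) with hEdef
  have hp1R : (1:ℝ) ≤ (p:ℝ) := by exact_mod_cast hp1
  have hstep : (p:ℝ)^(2:ℕ) ≤ (2 * ((p+1:ℕ):ℝ)) ^ E := by
    have h1 : (p:ℝ)^(2:ℕ) = (p:ℝ)^((2:ℕ):ℝ) := (Real.rpow_natCast _ _).symm
    rw [h1]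
    calc (p:ℝ)^((2:ℕ):ℝ) ≤ (p:ℝ)^E := by
          apply Real.rpow_le_rpow_of_exponent_le hp1R
          exact_mod_cast hE
      _ ≤ (2 * ((p+1:ℕ):ℝ)) ^ E := by
          apply Real.rpow_le_rpow (by linarith) _ (by linarith)
          push_cast; linarith
  have hb : Mseq τ σ p / Mseq τ σ (p+1) ≤ 1 / (p:ℝ)^(2:ℕ) := by
    refine le_trans hkey ?_
    apply one_div_le_one_div_of_le (by positivity)
    exact hstep
  rw [Real.norm_eq_abs, Real.norm_eq_abs, abs_of_nonneg (hnonneg p),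
    abs_of_nonneg (by positivity), one_mul]
  exact hb
end

section
/- For τ>0 and σ>1, the sequence M_p^{τ,σ} = p^{τ p^σ} satisfies (M.1)': M_{p-q}^{τ,σ} · M_q^{τ,σ} ≤ M_p^{τ,σ} for all natural numbers q ≤ p. -/
open Real

lemma Mseq_aux (τ σ : ℝ) (hτ : 0 < τ) (hσ : 1 < σ) (a b : ℝ)
    (ha : 1 ≤ a) (hb : 1 ≤ b) :
    a ^ (τ * a ^ σ) * b ^ (τ * b ^ σ) ≤ (a + b) ^ (τ * (a + b) ^ σ) := by
  have ha0 : (0:ℝ) ≤ a := by linarith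
  have hb0 : (0:ℝ) ≤ b := by linarith
  have hs : (1:ℝ) ≤ a + b := by linarith
  have hs0 : (0:ℝ) < a + b := by linarith
  have h1 : a ^ (τ * a ^ σ) ≤ (a + b) ^ (τ * a ^ σ) :=
    Real.rpow_le_rpow ha0 (by linarith) (by positivity)
  have h2 : b ^ (τ * b ^ σ) ≤ (a + b) ^ (τ * b ^ σ) :=
    Real.rpow_le_rpow hb0 (by linarith) (by positivity)
  calc a ^ (τ * a ^ σ) * b ^ (τ * b ^ σ)
      ≤ (a + b) ^ (τ * a ^ σ) * (a + b) ^ (τ * b ^ σ) := by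
        apply mul_le_mul h1 h2 (by positivity) (by positivity)
    _ = (a + b) ^ (τ * a ^ σ + τ * b ^ σ) := (Real.rpow_add hs0 _ _).symm
    _ ≤ (a + b) ^ (τ * (a + b) ^ σ) := by
        apply Real.rpow_le_rpow_of_exponent_le hs
        rw [← mul_add]
        have h := NNReal.add_rpow_le_rpow_add (⟨a, ha0⟩ : NNReal) (⟨b, hb0⟩ : NNReal) hσ.le
        have h' : a ^ σ + b ^ σ ≤ (a + b) ^ σ := by exact_mod_cast h
        nlinarith

theorem stmt4 (τ σ : ℝ) (hτ : 0 < τ) (hσ : 1 < σ) :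
    ∀ p q : ℕ, q ≤ p → Mseq τ σ (p - q) * Mseq τ σ q ≤ Mseq τ σ p := by
  intro p q hqp
  have hσ0 : σ ≠ 0 := by linarith
  have hM0 : Mseq τ σ 0 = 1 := by
    simp [Mseq, Real.zero_rpow hσ0]
  rcases Nat.eq_zero_or_pos q with hq | hq
  · subst hq; simp [hM0]
  rcases eq_or_lt_of_le hqp with hpq | hpq
  · subst hpq; simp [hM0]
  have ha1 : 1 ≤ p - q := by omega
  have hcast : ((p - q : ℕ) : ℝ) = (p : ℝ) - (q : ℝ) := by
    push_cast [hqp]; ring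
  have ha : (1:ℝ) ≤ ((p - q : ℕ) : ℝ) := by exact_mod_cast ha1
  have hb : (1:ℝ) ≤ (q : ℝ) := by exact_mod_cast hq
  have key := Mseq_aux τ σ hτ hσ ((p - q : ℕ) : ℝ) (q : ℝ) ha hb
  have hsum : ((p - q : ℕ) : ℝ) + (q : ℝ) = (p : ℝ) := by
    rw [hcast]; ring
  simpa [Mseq, hsum] using key
end

section
/- The Lambert W function (principal branch) satisfies ln x − ln(ln x) ≤ W(x) ≤ ln x − (1/2)·ln(ln x) for all x ≥ e, with equality if and only if x = e. -/
open Real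

/-- bounds for the principal branch of the Lambert W function,
`ln x − ln(ln x) ≤ W(x) ≤ ln x − (1/2)·ln(ln x)` for `x ≥ e`, with equality iff `x = e`. -/
theorem stmt7 (W : ℝ → ℝ)
    (hW_inv : ∀ x : ℝ, 0 ≤ x → W x * Real.exp (W x) = x)
    (hW_nonneg : ∀ x : ℝ, 0 ≤ x → 0 ≤ W x) :
    ∀ x : ℝ, Real.exp 1 ≤ x →
      (Real.log x - Real.log (Real.log x) ≤ W x ∧
        W x ≤ Real.log x - (1 / 2) * Real.log (Real.log x)) ∧
      (Real.log x - Real.log (Real.log x) = W x ↔ x = Real.exp 1) ∧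
      (W x = Real.log x - (1 / 2) * Real.log (Real.log x) ↔ x = Real.exp 1) := by
  intro x hx
  have hx0 : (0:ℝ) ≤ x := le_trans (exp_pos 1).le hx
  set w := W x with hw
  have hinv : w * Real.exp w = x := hW_inv x hx0
  have hw0 : 0 ≤ w := hW_nonneg x hx0
  have hw1 : 1 ≤ w := by
    by_contra h
    push_neg at h
    have h2 : Real.exp w < Real.exp 1 := Real.exp_lt_exp.2 h
    have h3 : w * Real.exp w < 1 * Real.exp 1 := by
      calc w * Real.exp w ≤ w * Real.exp 1 := by
            exact mul_le_mul_of_nonneg_left h2.le hw0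
        _ < 1 * Real.exp 1 := by
            exact mul_lt_mul_of_pos_right h (exp_pos 1)
    rw [hinv, one_mul] at h3
    linarith
  have hwpos : (0:ℝ) < w := lt_of_lt_of_le one_pos hw1
  have hlogx : Real.log x = w + Real.log w := by
    rw [← hinv, Real.log_mul (ne_of_gt hwpos) (Real.exp_ne_zero w), Real.log_exp]
    ring
  have hlw : 0 ≤ Real.log w := Real.log_nonneg hw1
  have harg : 0 < w + Real.log w := by linarith
  have hllx : Real.log (Real.log x) = Real.log (w + Real.log w) := by rw [hlogx]
  -- w = 1 ↔ x = e
  have hwx : w = 1 → x = Real.exp 1 := by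
    intro h1; rw [← hinv, h1, one_mul]
  have hxw : x = Real.exp 1 → w = 1 := by
    intro hxe
    by_contra hne
    have hgt : 1 < w := lt_of_le_of_ne hw1 (Ne.symm hne)
    have : 1 * Real.exp 1 < w * Real.exp w := by
      calc 1 * Real.exp 1 < w * Real.exp 1 := by
            exact mul_lt_mul_of_pos_right hgt (exp_pos 1)
        _ ≤ w * Real.exp w := by
            exact mul_le_mul_of_nonneg_left (Real.exp_le_exp.2 hgt.le) hw0
    rw [hinv, hxe, one_mul] at this
    linarith
  -- lower bound
  have hlow : Real.log x - Real.log (Real.log x) ≤ w := by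
    rw [hllx, hlogx]
    have : Real.log w ≤ Real.log (w + Real.log w) :=
      Real.log_le_log hwpos (by linarith)
    linarith
  -- upper bound: w + log w ≤ w^2
  have hsub : Real.log w ≤ w - 1 := Real.log_le_sub_one_of_pos hwpos
  have hsq : w + Real.log w ≤ w ^ 2 := by nlinarith [sq_nonneg (w - 1)]
  have hlog2 : Real.log (w ^ 2) = 2 * Real.log w := by
    rw [Real.log_pow]; push_cast; ring
  have hup : w ≤ Real.log x - (1 / 2) * Real.log (Real.log x) := by
    rw [hllx, hlogx]
    have h1 : Real.log (w + Real.log w) ≤ Real.log (w ^ 2) :=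
      Real.log_le_log harg hsq
    rw [hlog2] at h1
    linarith
  refine ⟨⟨hlow, hup⟩, ⟨?_, fun h => ?_⟩, ⟨?_, fun h => ?_⟩⟩
  · intro heq
    rw [hllx, hlogx] at heq
    have hle : Real.log (w + Real.log w) = Real.log w := by linarith
    have : w + Real.log w = w := by
      have := congrArg Real.exp hle
      rwa [Real.exp_log harg, Real.exp_log hwpos] at this
    have hlw0 : Real.log w = 0 := by linarith
    have : w = 1 := by
      have := congrArg Real.exp hlw0
      rwa [Real.exp_log hwpos, Real.exp_zero] at this
    exact hwx this
  · have h1 : w = 1 := hxw h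
    rw [hllx, hlogx, h1]
    simp
  · intro heq
    rw [hllx, hlogx] at heq
    have hle : Real.log (w + Real.log w) = 2 * Real.log w := by linarith
    rw [← hlog2] at hle
    have heq2 : w + Real.log w = w ^ 2 := by
      have := congrArg Real.exp hle
      rwa [Real.exp_log harg, Real.exp_log (by positivity)] at this
    by_contra hne
    have hne1 : w ≠ 1 := fun h1 => hne (hwx h1)
    have hgt : 1 < w := lt_of_le_of_ne hw1 (Ne.symm hne1)
    have hstrict : Real.log w < w - 1 := Real.log_lt_sub_one_of_pos hwpos hne1
    nlinarith [sq_nonneg (w - 1)]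
  · have h1 : w = 1 := hxw h
    rw [hllx, hlogx, h1]
    simp
end

section
/- Let τ > 0, σ > 1, h > 0, and T_{τ,σ,h}(k) = sup_{p∈ℕ} ln⁺(h^{p^σ} k^p / p^{τ p^σ}). Then for every t > 0 there exists a constant C > 0 such that T_{τ,σ,1}(k) < C·k^{1/t} for all k > 0. In particular e^{T_{τ,σ,h}(k)} grows slower at infinity than every subexponential function e^{Ck^{1/t}}. -/
open Real

/-- The extended associated function
`T_{τ,σ,h}(k) = sup_{p∈ℕ} ln⁺(h^{p^σ} k^p / p^{τ p^σ})`. -/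
noncomputable def Tassoc (τ σ h k : ℝ) : ℝ :=
  ⨆ p : ℕ, max 0 (Real.log (h ^ ((p : ℝ) ^ σ) * k ^ p / (p : ℝ) ^ (τ * (p : ℝ) ^ σ)))

/-!
For `p ≥ 2` the logarithm of `k^p / p^{τ p^σ}` is at most `p L - c p^σ` with `L = log⁺ k` and
`c = τ log 2`. Maximising over `p` gives a bound of order `L^{σ/(σ-1)}`: if `c p^{σ-1} ≥ L` the
expression is nonpositive, and otherwise `p < (L/c)^{1/(σ-1)}`. So `T_{τ,σ,1}(k)` is bounded by a
power of `log⁺ k`, and every power of `log⁺ k` is `O(k^s)` for every `s > 0`.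
-/

lemma posLog_rpow_le {a s x : ℝ} (ha : 0 < a) (hs : 0 < s) (hx : 0 ≤ x) :
    log⁺ x ^ a ≤ (a / s) ^ a * x ^ s := by
  have hlog : log⁺ x ≤ a / s * x ^ (s / a) := by
    refine max_le (by positivity) ?_
    calc log x ≤ x ^ (s / a) / (s / a) := log_le_rpow_div hx (div_pos hs ha)
      _ = a / s * x ^ (s / a) := by field_simp
  calc log⁺ x ^ a ≤ (a / s * x ^ (s / a)) ^ a := rpow_le_rpow posLog_nonneg hlog ha.le
    _ = (a / s) ^ a * x ^ s := by
      rw [mul_rpow (by positivity) (by positivity), ← rpow_mul hx, div_mul_cancel₀ s ha.ne']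

lemma mul_sub_mul_rpow_le {σ c x y : ℝ} (hσ : 1 < σ) (hc : 0 < c) (hx : 0 ≤ x) (hy : 0 ≤ y) :
    x * y - c * x ^ σ ≤ y ^ (σ / (σ - 1)) / c ^ (σ - 1)⁻¹ := by
  have hσ1 : 0 < σ - 1 := sub_pos.2 hσ
  have hbound : (y / c) ^ (σ - 1)⁻¹ * y = y ^ (σ / (σ - 1)) / c ^ (σ - 1)⁻¹ := by
    have he : σ / (σ - 1) = (σ - 1)⁻¹ + 1 := by field_simp; ring
    rw [div_rpow hy hc.le, div_mul_eq_mul_div, he, rpow_add_one' hy (by positivity)]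
  rw [← hbound]
  rcases le_or_gt x ((y / c) ^ (σ - 1)⁻¹) with hsmall | hlarge
  · have : 0 ≤ c * x ^ σ := by positivity
    nlinarith [mul_le_mul_of_nonneg_right hsmall hy]
  · have hx0 : 0 < x := lt_of_le_of_lt (by positivity) hlarge
    have hpow : y < x ^ (σ - 1) * c :=
      (div_lt_iff₀ hc).1 ((rpow_inv_lt_iff_of_pos (by positivity) hx hσ1).1 hlarge)
    have hxy : x * y ≤ c * x ^ σ :=
      calc x * y ≤ x * (x ^ (σ - 1) * c) := mul_le_mul_of_nonneg_left hpow.le hx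
        _ = c * x ^ σ := by rw [rpow_sub_one hx0.ne']; field_simp
    have : 0 ≤ (y / c) ^ (σ - 1)⁻¹ * y := by positivity
    linarith

lemma mul_log_sub_rpow_mul_log_le {τ σ k x : ℝ} (hτ : 0 < τ) (hσ : 1 < σ) (hx : 2 ≤ x) :
    x * log k - τ * x ^ σ * log x ≤ log⁺ k ^ (σ / (σ - 1)) / (τ * log 2) ^ (σ - 1)⁻¹ := by
  have hx0 : 0 < x := by linarith
  have hcoef : τ * log 2 * x ^ σ ≤ τ * x ^ σ * log x := by
    rw [mul_right_comm]
    gcongr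
  have hlog : x * log k ≤ x * log⁺ k := mul_le_mul_of_nonneg_left (le_max_right _ _) hx0.le
  have := mul_sub_mul_rpow_le hσ (mul_pos hτ (log_pos one_lt_two)) hx0.le (posLog_nonneg (x := k))
  linarith

lemma posLog_pow_div_rpow_le {τ σ k : ℝ} (hτ : 0 < τ) (hσ : 1 < σ) (hk : 0 < k) (p : ℕ) :
    log⁺ (k ^ p / (p : ℝ) ^ (τ * (p : ℝ) ^ σ)) ≤
      log⁺ k + log⁺ k ^ (σ / (σ - 1)) / (τ * log 2) ^ (σ - 1)⁻¹ := by
  have hrem : 0 ≤ log⁺ k ^ (σ / (σ - 1)) / (τ * log 2) ^ (σ - 1)⁻¹ :=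
    div_nonneg (rpow_nonneg posLog_nonneg _) (rpow_nonneg (mul_pos hτ (log_pos one_lt_two)).le _)
  have hlog : log k ≤ log⁺ k := le_max_right _ _
  refine max_le (add_nonneg posLog_nonneg hrem) ?_
  rcases p with _ | _ | p
  · simpa [zero_rpow (by linarith : σ ≠ 0)] using add_nonneg posLog_nonneg hrem
  · simpa using add_le_add hlog hrem
  · have hp : (2 : ℝ) ≤ (p + 2 : ℕ) := by simp
    rw [log_div (by positivity) (by positivity), log_pow, log_rpow (by positivity)]
    linarith [mul_log_sub_rpow_mul_log_le (k := k) hτ hσ hp, posLog_nonneg (x := k)]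

theorem stmt12 (τ σ : ℝ) (hτ : 0 < τ) (hσ : 1 < σ) :
    ∀ t : ℝ, 0 < t → ∃ C > (0 : ℝ), ∀ k : ℝ, 0 < k →
      Tassoc τ σ 1 k < C * k ^ (1 / t) := by
  intro t ht
  set q := σ / (σ - 1)
  set c := τ * log 2
  have hc : 0 < c := mul_pos hτ (log_pos one_lt_two)
  have hq : 0 < q := div_pos (by linarith) (by linarith)
  have hs : 0 < 1 / t := by positivity
  set C := 1 / (1 / t) + (q / (1 / t)) ^ q / c ^ (σ - 1)⁻¹
  refine ⟨C + 1, by positivity, fun k hk => ?_⟩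
  have hT : Tassoc τ σ 1 k ≤ log⁺ k + log⁺ k ^ q / c ^ (σ - 1)⁻¹ :=
    ciSup_le fun p => by
      rw [one_rpow, one_mul]
      exact posLog_pow_div_rpow_le hτ hσ hk p
  have hlin := posLog_rpow_le one_pos hs hk.le
  have hpow := posLog_rpow_le hq hs hk.le
  simp only [rpow_one] at hlin
  calc Tassoc τ σ 1 k ≤ log⁺ k + log⁺ k ^ q / c ^ (σ - 1)⁻¹ := hT
    _ ≤ 1 / (1 / t) * k ^ (1 / t) + (q / (1 / t)) ^ q * k ^ (1 / t) / c ^ (σ - 1)⁻¹ := by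
      gcongr
    _ = C * k ^ (1 / t) := by ring
    _ < (C + 1) * k ^ (1 / t) := by gcongr; exact lt_add_one C
end

section
/- Let τ, h > 0 and σ > 1, and set C_{τ,σ,h} = h^{-(σ-1)/τ}·e^{(σ-1)/σ}·(σ-1)/(τσ). Then there exist constants such that for all k > e: exp{(2^{σ-1}τ)^{-1/(σ-1)}·((σ-1)/σ)^{σ/(σ-1)}·W(C_{τ,σ,h}·ln k)^{-1/(σ-1)}·(ln k)^{σ/(σ-1)}} ≲ e^{T_{τ,σ,h}(k)} ≲ exp{((σ-1)/(τσ))^{1/(σ-1)}·W(C_{τ,σ,h}·ln k)^{-1/(σ-1)}·(ln k)^{σ/(σ-1)}}. -/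
/-!
Write `H = h^{1/τ}` and `L = log k`. The logarithm of the `p`-th term of `T_{τ,σ,h}(k)` is
`f(p)` for `f(s) = s L - τ s^σ log (s / H)`, and `x` is a critical point of `f` exactly when
`L = τ x^{σ-1} (σ log (x / H) + 1)`. Solving this with `v = W(C_{τ,σ,h} L)` gives
`x = H e^{(v - (σ-1)/σ)/(σ-1)}` with `x^{σ-1} = (σ-1) L / (τ σ v)`, and the two exponents of the
statement become `x L` and `(σ-1)/(2σ) · x L`.

Upper bound: on `[H, ∞)` the function `f` is maximal at `x`, where
`f(x) = x L - τ x^σ log (x/H) ≤ x L`, while on `[0, H]` it is at most `H L + τ H^σ`. Lower bound: at `p = ⌈x/2⌉ ≤ 2^{-1/σ} x` the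
penalty `τ p^σ log (p/H)` is at most half of `τ x^σ log (x/H) ≤ x L / σ`, so
`f(p) ≥ x L / 2 - x L / (2σ)`. Both arguments need `x` large; for bounded `x` the slope `L` is
bounded too and the constants absorb everything.
-/

open Real

noncomputable def assocExponent (τ σ H L s : ℝ) : ℝ := s * L - τ * s ^ σ * (log s - log H)

/-- `x` is a critical point of `assocExponent τ σ H L` exactly when `L = criticalSlope τ σ H x`. -/
noncomputable def criticalSlope (τ σ H x : ℝ) : ℝ := τ * x ^ (σ - 1) * (σ * (log x - log H) + 1)

/-- With `v = W(C_{τ,σ,h} L)`, the critical point of `assocExponent τ σ (h ^ (1 / τ)) L`. -/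
noncomputable def criticalPoint (τ σ h v : ℝ) : ℝ :=
  h ^ (1 / τ) * exp ((v - (σ - 1) / σ) / (σ - 1))

theorem log_term_eq_assocExponent {τ σ h k : ℝ} (hτ : τ ≠ 0) (hσ : σ ≠ 0) (hh : 0 < h)
    (hk : 0 < k) (p : ℕ) :
    log (h ^ ((p : ℝ) ^ σ) * k ^ p / (p : ℝ) ^ (τ * (p : ℝ) ^ σ)) =
      assocExponent τ σ (h ^ (1 / τ)) (log k) p := by
  rcases Nat.eq_zero_or_pos p with rfl | hp
  · -- both sides vanish: `0 ^ 0 = 1` on the left, `log 0 = 0` on the right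
    simp [assocExponent, zero_rpow hσ]
  · have hp0 : (0 : ℝ) < p := by exact_mod_cast hp
    rw [log_div (by positivity) (rpow_pos_of_pos hp0 _).ne',
      log_mul (rpow_pos_of_pos hh _).ne' (pow_pos hk p).ne', log_rpow hh, log_pow, log_rpow hp0,
      assocExponent, log_rpow hh]
    field_simp
    ring

theorem Tassoc_eq_iSup {τ σ h k : ℝ} (hτ : τ ≠ 0) (hσ : σ ≠ 0) (hh : 0 < h) (hk : 0 < k) :
    Tassoc τ σ h k = ⨆ p : ℕ, max 0 (assocExponent τ σ (h ^ (1 / τ)) (log k) p) := by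
  simp only [Tassoc, log_term_eq_assocExponent hτ hσ hh hk]

theorem iSup_max_zero_le {f : ℕ → ℝ} {M : ℝ} (hM : 0 ≤ M) (hf : ∀ p, f p ≤ M) :
    ⨆ p, max 0 (f p) ≤ M :=
  ciSup_le fun p => max_le hM (hf p)

theorem le_iSup_max_zero {f : ℕ → ℝ} {M : ℝ} (hf : ∀ p, f p ≤ M) (p : ℕ) :
    max 0 (f p) ≤ ⨆ p, max 0 (f p) :=
  le_ciSup ⟨max 0 M, by rintro _ ⟨q, rfl⟩; exact max_le_max le_rfl (hf q)⟩ p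

/-- `f(x e^r) ≤ f(x)` for `f = assocExponent τ σ H (criticalSlope τ σ H x)`, divided by `τ x^σ`,
with `b = log x - log H`. -/
theorem exp_mul_sub_exp_mul_le {σ b r : ℝ} (hσ : 1 ≤ σ) (hb : 0 ≤ b) (hbr : 0 ≤ b + r) :
    exp r * (σ * b + 1) - exp (σ * r) * (b + r) ≤ (σ - 1) * b + 1 := by
  have hσ1 : 0 ≤ σ - 1 := by linarith
  have hconv : exp r * (1 + (σ - 1) * r) ≤ exp (σ * r) := by
    rw [show σ * r = r + (σ - 1) * r by ring, exp_add]
    gcongr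
    linarith [add_one_le_exp ((σ - 1) * r)]
  have htan : exp r * (1 - r) ≤ 1 := by
    simpa [← exp_add] using mul_le_mul_of_nonneg_left
      (by linarith [add_one_le_exp (-r)] : 1 - r ≤ exp (-r)) (exp_pos r).le
  nlinarith [mul_le_mul_of_nonneg_right hconv hbr,
    mul_nonneg (by positivity : 0 ≤ (σ - 1) * b + 1) (by linarith : 0 ≤ 1 - exp r * (1 - r)),
    mul_nonneg (mul_nonneg hσ1 (sq_nonneg r)) (exp_pos r).le]

theorem rpow_mul_log_sub_le {σ H s : ℝ} (hσ : 1 ≤ σ) (hs : 0 ≤ s) (hsH : s ≤ H) :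
    s ^ σ * (log H - log s) ≤ H ^ σ := by
  rcases hs.eq_or_lt with rfl | hs
  · simp [zero_rpow (by linarith : σ ≠ 0), rpow_nonneg hsH]
  have hH : 0 < H := hs.trans_le hsH
  calc s ^ σ * (log H - log s) ≤ s ^ σ * (H / s) := by
        gcongr
        rw [← log_div hH.ne' hs.ne']
        linarith [log_le_sub_one_of_pos (div_pos hH hs)]
    _ = s ^ (σ - 1) * H := by rw [rpow_sub_one hs.ne']; ring
    _ ≤ H ^ (σ - 1) * H := by gcongr
    _ = H ^ σ := by rw [rpow_sub_one hH.ne']; field_simp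

theorem rpow_mul_log_sub_le_of_le {σ H s q : ℝ} (hσ : 0 ≤ σ) (hH : 0 < H) (hs : 0 < s)
    (hsq : s ≤ q) (hHq : H ≤ q) :
    s ^ σ * (log s - log H) ≤ q ^ σ * (log q - log H) := by
  have hlogq : 0 ≤ log q - log H := sub_nonneg.2 (log_le_log hH hHq)
  rcases le_total H s with hHs | hsH
  · gcongr
    · exact sub_nonneg.2 (log_le_log hH hHs)
    · exact rpow_nonneg (hs.le.trans hsq) σ
  · calc s ^ σ * (log s - log H) ≤ 0 :=
          mul_nonpos_of_nonneg_of_nonpos (rpow_nonneg hs.le σ) (sub_nonpos.2 (log_le_log hs hsH))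
      _ ≤ q ^ σ * (log q - log H) := mul_nonneg (rpow_nonneg (hs.le.trans hsq) σ) hlogq

section CriticalSlope

variable {τ σ H x : ℝ}

theorem criticalSlope_nonneg (hτ : 0 ≤ τ) (hx : 0 ≤ x) (hxb : 0 ≤ σ * (log x - log H) + 1) :
    0 ≤ criticalSlope τ σ H x :=
  mul_nonneg (mul_nonneg hτ (rpow_nonneg hx _)) hxb

theorem criticalSlope_nonneg_of_le (hτ : 0 ≤ τ) (hσ : 0 ≤ σ) (hH : 0 < H) (hx : H ≤ x) :
    0 ≤ criticalSlope τ σ H x :=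
  criticalSlope_nonneg hτ (hH.le.trans hx) (by nlinarith [log_le_log hH hx])

theorem mul_criticalSlope (hx : 0 < x) :
    x * criticalSlope τ σ H x = τ * x ^ σ * (σ * (log x - log H) + 1) := by
  rw [criticalSlope, rpow_sub_one hx.ne']
  field_simp

theorem criticalSlope_le_criticalSlope {R : ℝ} (hτ : 0 ≤ τ) (hσ : 1 ≤ σ) (hx : 0 < x)
    (hxb : 0 ≤ σ * (log x - log H) + 1) (hxR : x ≤ R) :
    criticalSlope τ σ H x ≤ criticalSlope τ σ H R := by
  have hR : 0 < R := hx.trans_le hxR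
  unfold criticalSlope
  gcongr

theorem assocExponent_mono_slope {L L' s : ℝ} (hs : 0 ≤ s) (hL : L ≤ L') :
    assocExponent τ σ H L s ≤ assocExponent τ σ H L' s := by
  unfold assocExponent
  gcongr

theorem assocExponent_criticalSlope_le_of_le {s : ℝ} (hτ : 0 ≤ τ) (hσ : 1 ≤ σ) (hH : 0 < H)
    (hx : H ≤ x) (hs : H ≤ s) :
    assocExponent τ σ H (criticalSlope τ σ H x) s ≤
      assocExponent τ σ H (criticalSlope τ σ H x) x := by
  have hx0 : 0 < x := hH.trans_le hx
  have hs0 : 0 < s := hH.trans_le hs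
  obtain ⟨r, hr⟩ : ∃ r, r = log s - log x := ⟨_, rfl⟩
  have hs_eq : s = x * exp r := by rw [hr, exp_sub, exp_log hs0, exp_log hx0]; field_simp
  have hsσ : s ^ σ = x ^ σ * exp (σ * r) := by
    rw [hs_eq, mul_rpow hx0.le (exp_pos r).le, ← exp_mul, mul_comm r]
  have hsL : s * criticalSlope τ σ H x = exp r * (x * criticalSlope τ σ H x) := by
    rw [hs_eq]; ring
  have key := exp_mul_sub_exp_mul_le hσ (sub_nonneg.2 (log_le_log hH hx))
    (show 0 ≤ log x - log H + r by linarith [log_le_log hH hs])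
  have hxσ : 0 ≤ τ * x ^ σ := by positivity
  rw [assocExponent, assocExponent, hsL, mul_criticalSlope hx0, hsσ,
    show log s - log H = log x - log H + r by rw [hr]; ring]
  linarith [mul_le_mul_of_nonneg_left key hxσ]

theorem assocExponent_criticalSlope_le {s : ℝ} (hτ : 0 ≤ τ) (hσ : 1 ≤ σ) (hH : 0 < H)
    (hx : H ≤ x) (hs : 0 ≤ s) :
    assocExponent τ σ H (criticalSlope τ σ H x) s ≤ x * criticalSlope τ σ H x + τ * H ^ σ := by
  have hx0 : 0 < x := hH.trans_le hx
  have hb : 0 ≤ log x - log H := sub_nonneg.2 (log_le_log hH hx)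
  have hL : 0 ≤ criticalSlope τ σ H x := criticalSlope_nonneg_of_le hτ (by linarith) hH hx
  rcases le_total s H with hsH | hHs
  · have := rpow_mul_log_sub_le hσ hs hsH
    have : s * criticalSlope τ σ H x ≤ x * criticalSlope τ σ H x := by gcongr; linarith
    unfold assocExponent
    nlinarith
  · have := assocExponent_criticalSlope_le_of_le hτ hσ hH hx hHs
    have : 0 ≤ τ * x ^ σ * (log x - log H) := by positivity
    have : 0 ≤ τ * H ^ σ := by positivity
    unfold assocExponent at *
    linarith

theorem assocExponent_criticalSlope_le_add {R s : ℝ} (hτ : 0 ≤ τ) (hσ : 1 ≤ σ) (hH : 0 < H)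
    (hHR : H ≤ R) (hx : 0 < x) (hxb : 0 ≤ σ * (log x - log H) + 1) (hs : 0 ≤ s) :
    assocExponent τ σ H (criticalSlope τ σ H x) s ≤
      x * criticalSlope τ σ H x + (R * criticalSlope τ σ H R + τ * H ^ σ) := by
  have hL := criticalSlope_nonneg hτ hx.le hxb
  have hLR : 0 ≤ criticalSlope τ σ H R := criticalSlope_nonneg_of_le hτ (by linarith) hH hHR
  rcases le_total R x with hRx | hxR
  · have := assocExponent_criticalSlope_le hτ hσ hH (hHR.trans hRx) hs
    nlinarith [hH.le.trans hHR]
  · calc assocExponent τ σ H (criticalSlope τ σ H x) s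
        ≤ assocExponent τ σ H (criticalSlope τ σ H R) s :=
          assocExponent_mono_slope hs (criticalSlope_le_criticalSlope hτ hσ hx hxb hxR)
      _ ≤ R * criticalSlope τ σ H R + τ * H ^ σ := assocExponent_criticalSlope_le hτ hσ hH hHR hs
      _ ≤ _ := by nlinarith

theorem iSup_assocExponent_criticalSlope_le {R : ℝ} (hτ : 0 ≤ τ) (hσ : 1 ≤ σ) (hH : 0 < H)
    (hHR : H ≤ R) (hx : 0 < x) (hxb : 0 ≤ σ * (log x - log H) + 1) :
    ⨆ p : ℕ, max 0 (assocExponent τ σ H (criticalSlope τ σ H x) p) ≤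
      x * criticalSlope τ σ H x + (R * criticalSlope τ σ H R + τ * H ^ σ) := by
  have hL := criticalSlope_nonneg hτ hx.le hxb
  have hLR : 0 ≤ criticalSlope τ σ H R := criticalSlope_nonneg_of_le hτ (by linarith) hH hHR
  have hR : 0 < R := hH.trans_le hHR
  exact iSup_max_zero_le (by positivity) fun p =>
    assocExponent_criticalSlope_le_add hτ hσ hH hHR hx hxb p.cast_nonneg

theorem exists_nat_le_assocExponent_criticalSlope (hτ : 0 ≤ τ) (hσ : 1 < σ) (hH : 0 < H)
    (hxH : 2 * H ≤ x) (hx : 1 ≤ ((1 / 2) ^ σ⁻¹ - 1 / 2) * x) :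
    ∃ p : ℕ, 1 / 2 * ((σ - 1) / σ) * (x * criticalSlope τ σ H x) ≤
      assocExponent τ σ H (criticalSlope τ σ H x) p := by
  -- rounding `x / 2` up stays below `θ x`, and `θ ^ σ = 1 / 2` halves the penalty
  set θ : ℝ := (1 / 2) ^ σ⁻¹
  have hσ0 : 0 < σ := by linarith
  have hx0 : 0 < x := by linarith
  have hθσ : θ ^ σ = 1 / 2 := rpow_inv_rpow (by norm_num) hσ0.ne'
  have hθ1 : θ ≤ 1 := rpow_le_one (by norm_num) (by norm_num) (by positivity)
  refine ⟨⌈x / 2⌉₊, ?_⟩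
  set p : ℕ := ⌈x / 2⌉₊
  have hp : x / 2 ≤ p := Nat.le_ceil _
  have hpθ : (p : ℝ) ≤ θ * x := by linarith [Nat.ceil_lt_add_one (by positivity : 0 ≤ x / 2)]
  have hpenalty : (p : ℝ) ^ σ * (log p - log H) ≤ 1 / 2 * (x ^ σ * (log x - log H)) :=
    calc (p : ℝ) ^ σ * (log p - log H) ≤ (θ * x) ^ σ * (log (θ * x) - log H) :=
          rpow_mul_log_sub_le_of_le hσ0.le hH (by linarith) hpθ (by linarith)
      _ ≤ θ ^ σ * x ^ σ * (log x - log H) := by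
          rw [mul_rpow (by positivity) hx0.le]
          gcongr
          exact mul_le_of_le_one_left hx0.le hθ1
      _ = 1 / 2 * (x ^ σ * (log x - log H)) := by rw [hθσ]; ring
  have hL : 0 ≤ criticalSlope τ σ H x := criticalSlope_nonneg_of_le hτ hσ0.le hH (by linarith)
  have hslope : τ * x ^ σ * (log x - log H) ≤ x * criticalSlope τ σ H x / σ := by
    rw [le_div_iff₀ hσ0, mul_criticalSlope hx0]
    nlinarith [(by positivity : 0 ≤ τ * x ^ σ)]
  have hgain : x / 2 * criticalSlope τ σ H x ≤ p * criticalSlope τ σ H x := by gcongr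
  have hcost := mul_le_mul_of_nonneg_left hpenalty hτ
  have hsplit : 1 / 2 * ((σ - 1) / σ) * (x * criticalSlope τ σ H x) =
      x / 2 * criticalSlope τ σ H x - x * criticalSlope τ σ H x / σ / 2 := by
    field_simp
  rw [assocExponent, hsplit]
  linarith

theorem le_iSup_assocExponent_criticalSlope {R : ℝ} (hτ : 0 ≤ τ) (hσ : 1 < σ) (hH : 0 < H)
    (hHR : 2 * H ≤ R) (hR : 1 ≤ ((1 / 2) ^ σ⁻¹ - 1 / 2) * R) (hx : 0 < x)
    (hxb : 0 ≤ σ * (log x - log H) + 1) :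
    1 / 2 * ((σ - 1) / σ) * (x * criticalSlope τ σ H x) ≤
      R * criticalSlope τ σ H R +
        ⨆ p : ℕ, max 0 (assocExponent τ σ H (criticalSlope τ σ H x) p) := by
  have hbdd (p : ℕ) := assocExponent_criticalSlope_le_add (R := R) hτ hσ.le hH (by linarith) hx
    hxb p.cast_nonneg
  have hsup : 0 ≤ ⨆ p : ℕ, max 0 (assocExponent τ σ H (criticalSlope τ σ H x) p) :=
    (le_max_left _ _).trans (le_iSup_max_zero hbdd 0)
  have hL : 0 ≤ criticalSlope τ σ H x := criticalSlope_nonneg hτ hx.le hxb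
  have hLR : 0 ≤ criticalSlope τ σ H R :=
    criticalSlope_nonneg_of_le hτ (by linarith) hH (by linarith)
  have hR0 : 0 < R := by linarith
  rcases le_total R x with hRx | hxR
  · have hθ : 0 < (1 / 2 : ℝ) ^ σ⁻¹ - 1 / 2 :=
      pos_of_mul_pos_left (b := R) (by linarith) (by linarith)
    obtain ⟨p, hp⟩ := exists_nat_le_assocExponent_criticalSlope (x := x) hτ hσ hH (by linarith)
      (hR.trans (by gcongr))
    calc _ ≤ assocExponent τ σ H (criticalSlope τ σ H x) p := hp
      _ ≤ max 0 (assocExponent τ σ H (criticalSlope τ σ H x) p) := le_max_right _ _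
      _ ≤ ⨆ p : ℕ, max 0 (assocExponent τ σ H (criticalSlope τ σ H x) p) :=
          le_iSup_max_zero hbdd p
      _ ≤ _ := le_add_of_nonneg_left (mul_nonneg hR0.le hLR)
  · have := criticalSlope_le_criticalSlope hτ hσ.le hx hxb hxR
    have hcoeff : 1 / 2 * ((σ - 1) / σ) ≤ 1 := by
      linarith [div_le_one_of_le₀ (by linarith : σ - 1 ≤ σ) (by linarith : (0 : ℝ) ≤ σ)]
    calc 1 / 2 * ((σ - 1) / σ) * (x * criticalSlope τ σ H x) ≤ x * criticalSlope τ σ H x :=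
          mul_le_of_le_one_left (mul_nonneg hx.le hL) hcoeff
      _ ≤ R * criticalSlope τ σ H R := by gcongr
      _ ≤ _ := le_add_of_nonneg_right hsup

end CriticalSlope

section CriticalPoint

variable {τ σ h v : ℝ}

theorem criticalPoint_pos (hh : 0 < h) : 0 < criticalPoint τ σ h v := by
  unfold criticalPoint; positivity

theorem log_criticalPoint (hσ : 1 < σ) (hh : 0 < h) :
    σ * (log (criticalPoint τ σ h v) - log (h ^ (1 / τ))) + 1 = σ * v / (σ - 1) := by
  have hσ1 : σ - 1 ≠ 0 := by linarith
  rw [criticalPoint, log_mul (by positivity) (exp_pos _).ne', log_exp]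
  field_simp
  ring

theorem criticalPoint_rpow_sub_one {L : ℝ} (hτ : 0 < τ) (hσ : 1 < σ) (hh : 0 < h) (hv0 : v ≠ 0)
    (hv : v * exp v = h ^ (-((σ - 1) / τ)) * exp ((σ - 1) / σ) * ((σ - 1) / (τ * σ)) * L) :
    criticalPoint τ σ h v ^ (σ - 1) = (σ - 1) / (τ * σ) * L / v := by
  have hσ1 : σ - 1 ≠ 0 := by linarith
  rw [rpow_neg hh.le] at hv
  rw [criticalPoint, mul_rpow (by positivity) (exp_pos _).le, ← rpow_mul hh.le, ← exp_mul,
    div_mul_cancel₀ _ hσ1, exp_sub, eq_div_iff hv0]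
  field_simp at hv ⊢
  exact hv

theorem criticalSlope_criticalPoint {L : ℝ} (hτ : 0 < τ) (hσ : 1 < σ) (hh : 0 < h) (hv0 : v ≠ 0)
    (hv : v * exp v = h ^ (-((σ - 1) / τ)) * exp ((σ - 1) / σ) * ((σ - 1) / (τ * σ)) * L) :
    criticalSlope τ σ (h ^ (1 / τ)) (criticalPoint τ σ h v) = L := by
  have hσ1 : σ - 1 ≠ 0 := by linarith
  rw [criticalSlope, criticalPoint_rpow_sub_one hτ hσ hh hv0 hv, log_criticalPoint hσ hh]
  field_simp

end CriticalPoint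

theorem rpow_mul_rpow_eq_mul {σ a L v x : ℝ} (hσ : 1 < σ) (ha : 0 ≤ a) (hL : 0 < L)
    (hv : 0 < v) (hx : 0 < x) (hxa : x ^ (σ - 1) = a * L / v) :
    a ^ (1 / (σ - 1)) * v ^ (-(1 / (σ - 1))) * L ^ (σ / (σ - 1)) = x * L := by
  have hσ1 : σ - 1 ≠ 0 := by linarith
  have hroot : x = a ^ (1 / (σ - 1)) * L ^ (1 / (σ - 1)) / v ^ (1 / (σ - 1)) := by
    rw [← mul_rpow ha hL.le, ← div_rpow (by positivity) hv.le, ← hxa, ← rpow_mul hx.le,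
      mul_one_div_cancel hσ1, rpow_one]
  rw [show σ / (σ - 1) = 1 / (σ - 1) + 1 by field_simp; ring, rpow_add hL, rpow_one,
    rpow_neg hv.le, hroot]
  ring

theorem two_rpow_mul_rpow_neg_mul_eq {τ σ V M : ℝ} (hτ : 0 < τ) (hσ : 1 < σ) :
    (2 ^ (σ - 1) * τ) ^ (-(1 / (σ - 1))) * ((σ - 1) / σ) ^ (σ / (σ - 1)) * V * M =
      1 / 2 * ((σ - 1) / σ) * (((σ - 1) / (τ * σ)) ^ (1 / (σ - 1)) * V * M) := by
  have hσ1 : σ - 1 ≠ 0 := by linarith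
  have hq : 0 < (σ - 1) / σ := div_pos (by linarith) (by linarith)
  rw [mul_rpow (by positivity) hτ.le, ← rpow_mul (by norm_num), mul_neg, mul_one_div_cancel hσ1,
    rpow_neg_one, show σ / (σ - 1) = 1 / (σ - 1) + 1 by field_simp; ring, rpow_add hq, rpow_one,
    show (σ - 1) / (τ * σ) = (σ - 1) / σ / τ by ring, div_rpow hq.le hτ.le, rpow_neg hτ.le]
  ring

theorem one_half_lt_one_half_rpow_inv {σ : ℝ} (hσ : 1 < σ) : 1 / 2 < (1 / 2 : ℝ) ^ σ⁻¹ := by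
  simpa using rpow_lt_rpow_of_exponent_gt (x := 1 / 2) (by norm_num) (by norm_num)
    (inv_lt_one_of_one_lt₀ hσ)

theorem stmt13_general (τ σ h : ℝ) (hτ : 0 < τ) (hh : 0 < h) (hσ : 1 < σ)
    (W : ℝ → ℝ)
    (hW_inv : ∀ x : ℝ, 0 ≤ x → W x * Real.exp (W x) = x) :
    ∃ c₁ > (0 : ℝ), ∃ c₂ > (0 : ℝ), ∀ k : ℝ, Real.exp 1 < k →
      Real.exp ((2 ^ (σ - 1) * τ) ^ (-(1 / (σ - 1))) * ((σ - 1) / σ) ^ (σ / (σ - 1)) *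
            (W ((h ^ (-((σ - 1) / τ)) * Real.exp ((σ - 1) / σ) * ((σ - 1) / (τ * σ))) *
                Real.log k)) ^ (-(1 / (σ - 1))) *
            (Real.log k) ^ (σ / (σ - 1))) ≤
          c₁ * Real.exp (Tassoc τ σ h k) ∧
        Real.exp (Tassoc τ σ h k) ≤
          c₂ * Real.exp (((σ - 1) / (τ * σ)) ^ (1 / (σ - 1)) *
            (W ((h ^ (-((σ - 1) / τ)) * Real.exp ((σ - 1) / σ) * ((σ - 1) / (τ * σ))) *
                Real.log k)) ^ (-(1 / (σ - 1))) *
            (Real.log k) ^ (σ / (σ - 1))) := by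
  set H := h ^ (1 / τ)
  set R := max (2 * H) ((1 / 2) ^ σ⁻¹ - 1 / 2)⁻¹
  have hH : 0 < H := by positivity
  have hHR : 2 * H ≤ R := le_max_left _ _
  have hR : 1 ≤ ((1 / 2) ^ σ⁻¹ - 1 / 2) * R :=
    (inv_le_iff_one_le_mul₀' (sub_pos.2 (one_half_lt_one_half_rpow_inv hσ))).1 (le_max_right _ _)
  refine ⟨exp (R * criticalSlope τ σ H R), exp_pos _,
    exp (R * criticalSlope τ σ H R + τ * H ^ σ), exp_pos _, fun k hk => ?_⟩
  have hk0 : 0 < k := (exp_pos 1).trans hk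
  have hL : 0 < log k := one_pos.trans ((lt_log_iff_exp_lt hk0).2 hk)
  have hT : Tassoc τ σ h k = ⨆ p : ℕ, max 0 (assocExponent τ σ H (log k) p) :=
    Tassoc_eq_iSup hτ.ne' (by linarith) hh hk0
  have hσ1 : 0 < σ - 1 := by linarith
  have hC : 0 < h ^ (-((σ - 1) / τ)) * exp ((σ - 1) / σ) * ((σ - 1) / (τ * σ)) :=
    mul_pos (by positivity) (div_pos hσ1 (by positivity))
  set v := W (h ^ (-((σ - 1) / τ)) * exp ((σ - 1) / σ) * ((σ - 1) / (τ * σ)) * log k)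
  have hv := hW_inv _ (mul_pos hC hL).le
  have hv0 : 0 < v := pos_of_mul_pos_left (hv ▸ mul_pos hC hL) (exp_pos v).le
  set x := criticalPoint τ σ h v
  have hx : 0 < x := criticalPoint_pos hh
  have hxb : 0 ≤ σ * (log x - log H) + 1 := (log_criticalPoint hσ hh).symm ▸ by positivity
  rw [two_rpow_mul_rpow_neg_mul_eq hτ hσ,
    rpow_mul_rpow_eq_mul hσ (div_nonneg hσ1.le (by positivity)) hL hv0 hx
      (criticalPoint_rpow_sub_one hτ hσ hh hv0.ne' hv),
    hT, ← criticalSlope_criticalPoint hτ hσ hh hv0.ne' hv, ← exp_add, ← exp_add, exp_le_exp,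
    exp_le_exp]
  exact ⟨le_iSup_assocExponent_criticalSlope hτ.le hσ hH hHR hR hx hxb,
    by linarith [iSup_assocExponent_criticalSlope_le hτ.le hσ.le hH (by linarith : H ≤ R) hx hxb]⟩

/-- two-sided asymptotic bounds for `e^{T_{τ,σ,h}(k)}` in terms of the
Lambert `W` function, with `C_{τ,σ,h} = h^{-(σ-1)/τ}·e^{(σ-1)/σ}·(σ-1)/(τσ)`. -/
theorem stmt13 (τ σ h : ℝ) (hτ : 0 < τ) (hh : 0 < h) (hσ : 1 < σ)
    (W : ℝ → ℝ)
    (hW_inv : ∀ x : ℝ, 0 ≤ x → W x * Real.exp (W x) = x)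
    (hW_nonneg : ∀ x : ℝ, 0 ≤ x → 0 ≤ W x) :
    ∃ c₁ > (0 : ℝ), ∃ c₂ > (0 : ℝ), ∀ k : ℝ, Real.exp 1 < k →
      Real.exp ((2 ^ (σ - 1) * τ) ^ (-(1 / (σ - 1))) * ((σ - 1) / σ) ^ (σ / (σ - 1)) *
            (W ((h ^ (-((σ - 1) / τ)) * Real.exp ((σ - 1) / σ) * ((σ - 1) / (τ * σ))) *
                Real.log k)) ^ (-(1 / (σ - 1))) *
            (Real.log k) ^ (σ / (σ - 1))) ≤
          c₁ * Real.exp (Tassoc τ σ h k) ∧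
        Real.exp (Tassoc τ σ h k) ≤
          c₂ * Real.exp (((σ - 1) / (τ * σ)) ^ (1 / (σ - 1)) *
            (W ((h ^ (-((σ - 1) / τ)) * Real.exp ((σ - 1) / σ) * ((σ - 1) / (τ * σ))) *
                Real.log k)) ^ (-(1 / (σ - 1))) *
            (Real.log k) ^ (σ / (σ - 1))) :=
  stmt13_general τ σ h hτ hh hσ W hW_inv
end

section
/- Let σ > 1. A decay bound of the form exp{−c·W(C·ln k)^{−1/(σ-1)}·(ln k)^{σ/(σ-1)}} (c, C > 0, k > e) decays faster than any negative power of k: for every N ∈ ℕ, exp{−c·W(C ln k)^{−1/(σ-1)}·(ln k)^{σ/(σ-1)}}·k^N → 0 as k → ∞; but slower than any stretched-exponential: for every t, ε > 0, exp{ε k^{1/t}}·exp{−c·W(C ln k)^{−1/(σ-1)}·(ln k)^{σ/(σ-1)}} → ∞ as k → ∞. -/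
/-!
With `L = log k` and `s = 1/(σ-1)`, so that `σ/(σ-1) = 1 + s`, the decay factor is `exp (-F L)`
where `F L = c · W(C L)^(-s) · L^(1+s)`. For large `L` the bounds on `W` give
`1 ≤ W(C L) ≤ log (C L)`. The first inequality yields `F L ≤ c L^(1+s)`, a power of `log k`, which
is negligible against `ε k^(1/t)`. The second yields `F L ≥ c (L / log (C L))^s · L`, and since
`L / log (C L) → ∞`, `F L - N L → ∞`.
-/

open Real Filter Asymptotics Topology

lemma tendsto_sub_atTop_of_isLittleO {α : Type*} {l : Filter α} {f g : α → ℝ}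
    (hf : Tendsto f l atTop) (hgf : g =o[l] f) : Tendsto (fun x => f x - g x) l atTop :=
  (IsEquivalent.refl.sub_isLittleO hgf).symm.tendsto_atTop hf

lemma tendsto_log_sub_log_log_atTop : Tendsto (fun x => log x - log (log x)) atTop atTop :=
  (tendsto_sub_atTop_of_isLittleO tendsto_id isLittleO_log_id_atTop).comp tendsto_log_atTop

lemma tendsto_div_log_atTop : Tendsto (fun x => x / log x) atTop atTop := by
  refine ((tendsto_exp_div_rpow_atTop 1).comp tendsto_log_atTop).congr' ?_
  filter_upwards [eventually_gt_atTop 0] with x hx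
  simp [exp_log hx]

lemma tendsto_div_log_const_mul_atTop {C : ℝ} (hC : 0 < C) :
    Tendsto (fun x => x / log (C * x)) atTop atTop := by
  refine ((tendsto_div_log_atTop.comp (tendsto_id.const_mul_atTop hC)).const_mul_atTop
    (inv_pos.2 hC)).congr fun x => ?_
  simp only [Function.comp, id]
  field_simp

lemma eventually_one_le_and_le_log {W : ℝ → ℝ}
    (hW : ∀ x, exp 1 ≤ x → log x - log (log x) ≤ W x ∧ W x ≤ log x - 1 / 2 * log (log x)) :
    ∀ᶠ x in atTop, 1 ≤ W x ∧ W x ≤ log x := by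
  filter_upwards [tendsto_log_sub_log_log_atTop.eventually_ge_atTop 1,
    eventually_ge_atTop (exp 1)] with x hx he
  obtain ⟨hlow, hup⟩ := hW x he
  have : 0 ≤ log (log x) := log_nonneg ((le_log_iff_exp_le ((exp_pos 1).trans_le he)).2 he)
  constructor <;> linarith

section Decay

variable {W : ℝ → ℝ} {C c s : ℝ}

noncomputable def decayExponent (W : ℝ → ℝ) (C c s L : ℝ) : ℝ :=
  c * W (C * L) ^ (-s) * L ^ (1 + s)

lemma decayExponent_le (hc : 0 ≤ c) (hs : 0 ≤ s) {L : ℝ} (hW : 1 ≤ W (C * L)) (hL : 0 ≤ L) :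
    decayExponent W C c s L ≤ c * L ^ (1 + s) := by
  have : W (C * L) ^ (-s) ≤ 1 := rpow_le_one_of_one_le_of_nonpos hW (neg_nonpos.2 hs)
  simpa [decayExponent] using
    mul_le_mul_of_nonneg_right (mul_le_mul_of_nonneg_left this hc) (rpow_nonneg hL _)

lemma mul_div_rpow_mul_le_decayExponent (hc : 0 ≤ c) (hs : 0 ≤ s) {y L : ℝ}
    (hW : 0 < W (C * L)) (hWy : W (C * L) ≤ y) (hL : 0 < L) :
    c * (L / y) ^ s * L ≤ decayExponent W C c s L := by
  have hy : 0 < y := hW.trans_le hWy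
  have : y ^ (-s) ≤ W (C * L) ^ (-s) := rpow_le_rpow_of_nonpos hW hWy (neg_nonpos.2 hs)
  calc c * (L / y) ^ s * L = c * y ^ (-s) * L ^ (1 + s) := by
        rw [div_rpow hL.le hy.le, rpow_neg hy.le, rpow_add hL, rpow_one]
        ring
    _ ≤ decayExponent W C c s L := by unfold decayExponent; gcongr

lemma tendsto_decayExponent_sub_mul_atTop (hC : 0 < C) (hc : 0 < c) (hs : 0 < s)
    (hW : ∀ᶠ x in atTop, 1 ≤ W x ∧ W x ≤ log x) (a : ℝ) :
    Tendsto (fun L => decayExponent W C c s L - a * L) atTop atTop := by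
  have hratio : Tendsto (fun L => c * (L / log (C * L)) ^ s - a) atTop atTop :=
    tendsto_atTop_add_const_right _ (-a) <|
      ((tendsto_rpow_atTop hs).comp (tendsto_div_log_const_mul_atTop hC)).const_mul_atTop hc
  refine tendsto_atTop_mono' _ ?_ (hratio.atTop_mul_atTop₀ tendsto_id)
  filter_upwards [(tendsto_id.const_mul_atTop hC).eventually hW, eventually_gt_atTop 0]
    with L ⟨hW1, hWlog⟩ hL
  simp only [id] at hW1 hWlog ⊢
  have := mul_div_rpow_mul_le_decayExponent hc.le hs.le (one_pos.trans_le hW1) hWlog hL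
  rw [sub_mul]
  linarith

theorem tendsto_exp_neg_decayExponent_log_mul_pow (hC : 0 < C) (hc : 0 < c) (hs : 0 < s)
    (hW : ∀ᶠ x in atTop, 1 ≤ W x ∧ W x ≤ log x) (N : ℕ) :
    Tendsto (fun k => exp (-decayExponent W C c s (log k)) * k ^ N) atTop (𝓝 0) := by
  refine (tendsto_exp_neg_atTop_nhds_zero.comp
    ((tendsto_decayExponent_sub_mul_atTop hC hc hs hW N).comp tendsto_log_atTop)).congr' ?_
  filter_upwards [eventually_gt_atTop 0] with k hk
  simp only [Function.comp, neg_sub, exp_sub, ← log_pow, exp_log (pow_pos hk N), exp_neg]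
  ring

theorem tendsto_exp_mul_rpow_mul_exp_neg_decayExponent_log (hC : 0 < C) (hc : 0 ≤ c)
    (hs : 0 ≤ s) (hW : ∀ᶠ x in atTop, 1 ≤ W x) {t ε : ℝ} (ht : 0 < t) (hε : 0 < ε) :
    Tendsto (fun k => exp (ε * k ^ (1 / t)) * exp (-decayExponent W C c s (log k)))
      atTop atTop := by
  have hgap : Tendsto (fun k => ε * k ^ (1 / t) - c * log k ^ (1 + s)) atTop atTop :=
    tendsto_sub_atTop_of_isLittleO
      ((tendsto_rpow_atTop (by positivity)).const_mul_atTop hε)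
      (((isLittleO_log_rpow_rpow_atTop _ (by positivity)).const_mul_left c).const_mul_right'
        (Ne.isUnit hε.ne'))
  refine tendsto_atTop_mono' _ ?_ (tendsto_exp_atTop.comp hgap)
  filter_upwards [(tendsto_log_atTop.const_mul_atTop hC).eventually hW,
    tendsto_log_atTop.eventually_ge_atTop 0] with k hW1 hlog
  rw [Function.comp, ← exp_add, exp_le_exp]
  linarith [decayExponent_le hc hs hW1 hlog]

end Decay

/-- the decay `exp{−c·W(C ln k)^{−1/(σ−1)}·(ln k)^{σ/(σ−1)}}` is faster
than any negative power of `k`, but slower than any stretched exponential. -/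
theorem stmt19 (σ C c : ℝ) (hσ : 1 < σ) (hC : 0 < C) (hc : 0 < c)
    (W : ℝ → ℝ)
    (hW_bounds : ∀ x : ℝ, Real.exp 1 ≤ x →
      Real.log x - Real.log (Real.log x) ≤ W x ∧
        W x ≤ Real.log x - (1 / 2) * Real.log (Real.log x)) :
    (∀ N : ℕ,
        Tendsto
          (fun k : ℝ =>
            Real.exp (-(c * (W (C * Real.log k)) ^ (-(1 / (σ - 1))) *
              (Real.log k) ^ (σ / (σ - 1)))) * k ^ N)
          atTop (nhds 0)) ∧
      ∀ t : ℝ, 0 < t → ∀ ε : ℝ, 0 < ε →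
        Tendsto
          (fun k : ℝ =>
            Real.exp (ε * k ^ (1 / t)) *
              Real.exp (-(c * (W (C * Real.log k)) ^ (-(1 / (σ - 1))) *
                (Real.log k) ^ (σ / (σ - 1)))))
          atTop atTop := by
  have hs : 0 < 1 / (σ - 1) := one_div_pos.2 (sub_pos.2 hσ)
  have hexponent : σ / (σ - 1) = 1 + 1 / (σ - 1) := by
    field_simp [(sub_pos.2 hσ).ne']
    ring
  have hW := eventually_one_le_and_le_log hW_bounds
  rw [hexponent]
  exact ⟨tendsto_exp_neg_decayExponent_log_mul_pow hC hc hs hW,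
    fun t ht ε hε => tendsto_exp_mul_rpow_mul_exp_neg_decayExponent_log hC hc.le hs.le
      (hW.mono fun _ h => h.1) ht hε⟩
end
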